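/- arXiv:2202.01848 — 2 statements merged into one kernel-verified Lean document; each statement's English description precedes it below -/
import Mathlib

section
/- Let T be a real random variable whose law μ has a density f with respect to Lebesgue measure on ℝ, and define the maximum-specificity plausibility contour π(t) := μ{s ∈ ℝ : f(s) ≤ f(t)}. Then for every α ∈ (0,1), μ{t ∈ ℝ : π(t) ≤ α} ≤ α; that is, π(T) is stochastically no smaller than a uniform random variable on [0,1]. -/
/-!
The sublevel sets `{s | f s ≤ f t}` form a chain, and `{t | π t ≤ α}` is covered by the union of
those among them whose measure is at most `α`. Every set of reals has a countable cofinal subset,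
so this union is a countable increasing union, and its measure is the supremum of the measures of
its members, hence at most `α`.
-/

open MeasureTheory Set TopologicalSpace

section SeparableOrder

variable {β : Type*} [LinearOrder β] [TopologicalSpace β] [OrderTopology β] [DenselyOrdered β]
  [SeparableSpace β]

theorem exists_countable_cofinal_subset (C : Set β) :
    ∃ T ⊆ C, T.Countable ∧ ∀ c ∈ C, ∃ t ∈ T, c ≤ t := by
  obtain ⟨D, hD_countable, hD_dense⟩ := exists_countable_dense β
  choose! u hu using fun d : β => fun h : ∃ c ∈ C, d < c => h
  -- A greatest element of `C` cannot be approached strictly from above, so it is added separately.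
  refine ⟨(C ∩ upperBounds C) ∪ u '' {d ∈ D | ∃ c ∈ C, d < c}, ?_, ?_, ?_⟩
  · rintro _ (hc | ⟨d, ⟨-, hd⟩, rfl⟩)
    exacts [hc.1, (hu d hd).1]
  · have hgreatest : (C ∩ upperBounds C).Subsingleton := fun x hx y hy =>
      le_antisymm (hy.2 hx.1) (hx.2 hy.1)
    exact hgreatest.countable.union ((hD_countable.mono (sep_subset _ _)).image u)
  · intro c hc
    by_cases hmax : c ∈ upperBounds C
    · exact ⟨c, .inl ⟨hc, hmax⟩, le_rfl⟩
    obtain ⟨c', hc', hcc'⟩ : ∃ c' ∈ C, c < c' := by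
      simpa [mem_upperBounds] using hmax
    obtain ⟨d, hdD, hcd, hdc'⟩ := hD_dense.exists_between hcc'
    have hd : ∃ c ∈ C, d < c := ⟨c', hc', hdc'⟩
    exact ⟨u d, .inr ⟨d, ⟨hdD, hd⟩, rfl⟩, hcd.le.trans (hu d hd).2.le⟩

variable {α : Type*} [MeasurableSpace α]

theorem measure_biUnion_sublevel (μ : Measure α) (g : α → β) (C : Set β) :
    μ (⋃ c ∈ C, {x | g x ≤ c}) = ⨆ c ∈ C, μ {x | g x ≤ c} := by
  obtain ⟨T, hTC, hT_countable, hT_cofinal⟩ := exists_countable_cofinal_subset C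
  have hunion : ⋃ c ∈ C, {x | g x ≤ c} = ⋃ t ∈ T, {x | g x ≤ t} := by
    refine Subset.antisymm (iUnion₂_subset fun c hc x hx => ?_) (biUnion_subset_biUnion_left hTC)
    obtain ⟨t, ht, hct⟩ := hT_cofinal c hc
    exact mem_biUnion ht (le_trans hx hct)
  have hdirected : DirectedOn (fun c c' => {x | g x ≤ c} ⊆ {x | g x ≤ c'}) T := by
    intro c hc c' hc'
    rcases le_total c c' with h | h
    · exact ⟨c', hc', fun x hx => le_trans hx h, subset_rfl⟩
    · exact ⟨c, hc, subset_rfl, fun x hx => le_trans hx h⟩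
  refine le_antisymm ?_
    (iSup₂_le fun c hc => measure_mono (subset_biUnion_of_mem (u := fun c => {x | g x ≤ c}) hc))
  rw [hunion, measure_biUnion_eq_iSup hT_countable hdirected]
  exact biSup_mono hTC

theorem measure_setOf_measure_sublevel_le (μ : Measure α) (g : α → β) (a : ENNReal) :
    μ {t | μ {s | g s ≤ g t} ≤ a} ≤ a := by
  set A := {t | μ {s | g s ≤ g t} ≤ a}
  calc μ A ≤ μ (⋃ c ∈ g '' A, {s | g s ≤ c}) :=
        measure_mono fun t ht => mem_biUnion (mem_image_of_mem g ht) le_rfl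
    _ = ⨆ c ∈ g '' A, μ {s | g s ≤ c} := measure_biUnion_sublevel μ g _
    _ ≤ a := iSup₂_le <| forall_mem_image.2 fun _ ht => ht

end SeparableOrder

theorem stmt2_general (μ : Measure ℝ) [IsProbabilityMeasure μ]
    (f : ℝ → ℝ)
    (π : ℝ → ℝ) (hπ : ∀ t, π t = (μ {s | f s ≤ f t}).toReal) :
    ∀ α : ℝ, α ∈ Set.Ioo (0 : ℝ) 1 →
      μ {t | π t ≤ α} ≤ ENNReal.ofReal α := by
  intro α hα
  have hcontour : {t | π t ≤ α} = {t | μ {s | f s ≤ f t} ≤ ENNReal.ofReal α} := by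
    ext t
    simp only [mem_ofPred_eq, hπ, ENNReal.le_ofReal_iff_toReal_le (measure_ne_top μ _) hα.1.le]
  rw [hcontour]
  exact measure_setOf_measure_sublevel_le μ f _

/-- Validity of the maximum-specificity plausibility contour: if `μ` is the law of `T`
with density `f` w.r.t. Lebesgue measure, and `π(t) := μ{s | f(s) ≤ f(t)}`, then
`μ{t | π(t) ≤ α} ≤ α` for all `α ∈ (0,1)`. -/
theorem stmt2 (μ : Measure ℝ) [IsProbabilityMeasure μ]
    (f : ℝ → ℝ) (hf : Measurable f) (hf0 : ∀ x, 0 ≤ f x)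
    (hμ : μ = volume.withDensity (fun x => ENNReal.ofReal (f x)))
    (π : ℝ → ℝ) (hπ : ∀ t, π t = (μ {s | f s ≤ f t}).toReal) :
    ∀ α : ℝ, α ∈ Set.Ioo (0 : ℝ) 1 →
      μ {t | π t ≤ α} ≤ ENNReal.ofReal α :=
  stmt2_general μ f π hπ
end

section
/- Let (Ω, 𝔽, P) be a probability space, ν > 0, and T : Ω → ℝ a random variable whose law has density f_ν, the Student t density with ν degrees of freedom. Define π(t) := P(f_ν(T) < f_ν(t)). Let h : Ω → ℝ be any measurable function with |h(ω)| ≤ |T(ω)| for P-almost every ω. Then for every α ∈ (0,1), P(π(h) ≤ α) ≤ α. -/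
/-! Since `f_ν` is a strictly decreasing function of `|x|`, `|h| ≤ |T|` gives
`f_ν(T) ≤ f_ν(h)`, hence `π(h) ≥ F(f_ν(T))` with `F(y) = P(f_ν(T) < y)`. The law of `f_ν(T)`
has no atoms, because `f_ν` is two-to-one and `T` has a density; so `F` is the distribution
function of `Y = f_ν(T)`, and for every real random variable `Y` with distribution function `F`
the event `F(Y) ≤ α` has probability at most `α`. -/

open MeasureTheory ProbabilityTheory

/-- The Student t density with `ν` degrees of freedom. -/
noncomputable def studentTPdf (ν : ℝ) (x : ℝ) : ℝ :=
  Real.Gamma ((ν + 1) / 2) / (Real.sqrt (ν * Real.pi) * Real.Gamma (ν / 2)) *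
    (1 + x ^ 2 / ν) ^ (-((ν + 1) / 2))

open Set

lemma Real.exists_cofinal_seq {A : Set ℝ} (hA : A.Nonempty) :
    ∃ u : ℕ → ℝ, (∀ n, u n ∈ A) ∧ ∀ y ∈ A, ∃ n, y ≤ u n := by
  by_cases hbdd : BddAbove A
  · by_cases hmax : sSup A ∈ A
    · exact ⟨fun _ => sSup A, fun _ => hmax, fun y hy => ⟨0, le_csSup hbdd hy⟩⟩
    obtain ⟨u, -, hu_lim, hu_mem⟩ := exists_seq_tendsto_sSup hA hbdd
    refine ⟨u, hu_mem, fun y hy => ?_⟩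
    have hlt : y < sSup A := (le_csSup hbdd hy).lt_of_ne (ne_of_mem_of_not_mem hy hmax)
    obtain ⟨n, hn⟩ := (hu_lim.eventually (lt_mem_nhds hlt)).exists
    exact ⟨n, hn.le⟩
  · choose u hu_mem hu_gt using not_bddAbove_iff.1 hbdd
    exact ⟨fun n => u n, fun n => hu_mem n,
      fun y _ => ⟨⌈y⌉₊, (Nat.le_ceil y).trans (hu_gt _).le⟩⟩

lemma measure_le_of_forall_measure_Iic_le (μ : Measure ℝ) {A : Set ℝ} {a : ENNReal}
    (hA : ∀ y ∈ A, μ (Iic y) ≤ a) : μ A ≤ a := by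
  rcases A.eq_empty_or_nonempty with rfl | hne
  · simp
  obtain ⟨u, hu_mem, hu_cofinal⟩ := Real.exists_cofinal_seq hne
  have hcover : A ⊆ ⋃ n, Iic (u n) := fun y hy =>
    mem_iUnion.2 ((hu_cofinal y hy).imp fun _ => id)
  have hdir : Directed (· ⊆ ·) fun n => Iic (u n) := fun m n =>
    (le_total (u m) (u n)).elim (fun h => ⟨n, Iic_subset_Iic.2 h, le_rfl⟩)
      fun h => ⟨m, le_rfl, Iic_subset_Iic.2 h⟩
  calc μ A ≤ μ (⋃ n, Iic (u n)) := measure_mono hcover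
    _ = ⨆ n, μ (Iic (u n)) := hdir.measure_iUnion
    _ ≤ a := iSup_le fun n => hA _ (hu_mem n)

lemma measure_setOf_measure_Iic_le (μ : Measure ℝ) (a : ENNReal) :
    μ {y | μ (Iic y) ≤ a} ≤ a :=
  measure_le_of_forall_measure_Iic_le μ fun _ hy => hy

lemma nullSingletonClass_map_of_countable_preimage {α β : Type*} [MeasurableSpace α]
    [MeasurableSpace β] [MeasurableSingletonClass β] {μ : Measure α} [NullSingletonClass μ]
    {g : α → β} (hg : Measurable g) (hfib : ∀ b, (g ⁻¹' {b}).Countable) :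
    NullSingletonClass (μ.map g) where
  measure_singleton b := by
    rw [Measure.map_apply hg (measurableSet_singleton b)]
    exact (hfib b).measure_zero μ

section StudentT

variable {ν : ℝ}

lemma measurable_studentTPdf (ν : ℝ) : Measurable (studentTPdf ν) := by
  unfold studentTPdf
  fun_prop

lemma studentTPdf_abs (ν x : ℝ) : studentTPdf ν |x| = studentTPdf ν x := by
  simp only [studentTPdf, sq_abs]

lemma strictAntiOn_studentTPdf (hν : 0 < ν) : StrictAntiOn (studentTPdf ν) (Ici 0) := by
  intro x hx y _ hxy
  have hnorm : 0 < Real.Gamma ((ν + 1) / 2) / (Real.sqrt (ν * Real.pi) * Real.Gamma (ν / 2)) :=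
    div_pos (Real.Gamma_pos_of_pos (by linarith)) (mul_pos
      (Real.sqrt_pos.2 (mul_pos hν Real.pi_pos)) (Real.Gamma_pos_of_pos (by linarith)))
  have hbase : 1 + x ^ 2 / ν < 1 + y ^ 2 / ν := by gcongr
  exact mul_lt_mul_of_pos_left
    (Real.rpow_lt_rpow_of_neg (by positivity) hbase (by linarith)) hnorm

lemma studentTPdf_le_of_abs_le (hν : 0 < ν) {a b : ℝ} (hab : |a| ≤ |b|) :
    studentTPdf ν b ≤ studentTPdf ν a := by
  rw [← studentTPdf_abs ν a, ← studentTPdf_abs ν b]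
  exact (strictAntiOn_studentTPdf hν).antitoneOn (abs_nonneg a) (abs_nonneg b) hab

lemma countable_studentTPdf_preimage (hν : 0 < ν) (c : ℝ) :
    (studentTPdf ν ⁻¹' {c}).Countable := by
  rcases (studentTPdf ν ⁻¹' {c}).eq_empty_or_nonempty with hempty | ⟨x₀, hx₀⟩
  · simp [hempty]
  refine (toFinite {x₀, -x₀}).countable.mono fun x hx => ?_
  have habs : |x| = |x₀| := (strictAntiOn_studentTPdf hν).injOn (abs_nonneg x) (abs_nonneg x₀)
    (by rw [studentTPdf_abs, studentTPdf_abs, hx, hx₀])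
  exact abs_eq_abs.1 habs

end StudentT

theorem stmt7_general {Ω : Type*} [MeasurableSpace Ω]
    (P : Measure Ω) [IsProbabilityMeasure P] (ν : ℝ) (hν : 0 < ν)
    (T : Ω → ℝ) (hT : Measurable T)
    (hlaw : Measure.map T P = volume.withDensity (fun x => ENNReal.ofReal (studentTPdf ν x)))
    (π : ℝ → ℝ)
    (hπ : ∀ t, π t = (P {ω | studentTPdf ν (T ω) < studentTPdf ν t}).toReal)
    (h : Ω → ℝ) (hdom : ∀ᵐ ω ∂P, |h ω| ≤ |T ω|) :
    ∀ α : ℝ, α ∈ Set.Ioo (0 : ℝ) 1 →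
      P {ω | π (h ω) ≤ α} ≤ ENNReal.ofReal α := by
  intro α hα
  set Y : Ω → ℝ := fun ω => studentTPdf ν (T ω)
  have hY : Measurable Y := (measurable_studentTPdf ν).comp hT
  set μ := P.map Y
  have : NullSingletonClass μ := by
    have hμ : μ = (P.map T).map (studentTPdf ν) :=
      (Measure.map_map (measurable_studentTPdf ν) hT).symm
    rw [hμ, hlaw]
    exact nullSingletonClass_map_of_countable_preimage (measurable_studentTPdf ν)
      (countable_studentTPdf_preimage hν)
  have hsub : {ω | π (h ω) ≤ α} ≤ᵐ[P] Y ⁻¹' {y | μ (Iic y) ≤ ENNReal.ofReal α} := by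
    filter_upwards [hdom] with ω hω hπω
    calc μ (Iic (Y ω)) = μ (Iio (Y ω)) := measure_congr Iio_ae_eq_Iic.symm
      _ = P {ω' | Y ω' < Y ω} := Measure.map_apply hY measurableSet_Iio
      _ ≤ P {ω' | Y ω' < studentTPdf ν (h ω)} :=
          measure_mono fun ω' hω' => lt_of_lt_of_le hω' (studentTPdf_le_of_abs_le hν hω)
      _ ≤ ENNReal.ofReal α :=
          (ENNReal.le_ofReal_iff_toReal_le (measure_ne_top _ _) hα.1.le).2 (hπ _ ▸ hπω)
  calc P {ω | π (h ω) ≤ α}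
      ≤ P (Y ⁻¹' {y | μ (Iic y) ≤ ENNReal.ofReal α}) := measure_mono_ae hsub
    _ ≤ μ {y | μ (Iic y) ≤ ENNReal.ofReal α} := Measure.le_map_apply hY.aemeasurable _
    _ ≤ ENNReal.ofReal α := measure_setOf_measure_Iic_le μ _

/-- Validity of the generalized IM contour: if `T` has the Student t distribution
with `ν` degrees of freedom, `π(t) := P(f_ν(T) < f_ν(t))`, and `h` is measurable
with `|h| ≤ |T|` a.e., then `P(π(h) ≤ α) ≤ α` for all `α ∈ (0,1)`. -/
theorem stmt7 {Ω : Type*} [MeasurableSpace Ω]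
    (P : Measure Ω) [IsProbabilityMeasure P] (ν : ℝ) (hν : 0 < ν)
    (T : Ω → ℝ) (hT : Measurable T)
    (hlaw : Measure.map T P = volume.withDensity (fun x => ENNReal.ofReal (studentTPdf ν x)))
    (π : ℝ → ℝ)
    (hπ : ∀ t, π t = (P {ω | studentTPdf ν (T ω) < studentTPdf ν t}).toReal)
    (h : Ω → ℝ) (hh : Measurable h) (hdom : ∀ᵐ ω ∂P, |h ω| ≤ |T ω|) :
    ∀ α : ℝ, α ∈ Set.Ioo (0 : ℝ) 1 →
      P {ω | π (h ω) ≤ α} ≤ ENNReal.ofReal α :=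
  stmt7_general P ν hν T hT hlaw π hπ h hdom
end
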